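/- arXiv:1304.7898 — 2 statements merged into one kernel-verified Lean document; each statement's English description precedes it below -/
import Mathlib

section
/- The map F(z₁,…,z_n) = (z₁/z_{k+1}, …, z_k/z_{k+1}, z_{k+1}/z_{k+2}, …, z_{n−1}/z_n, z_n) is a biholomorphism from the generalized Hartogs triangle H^n_k = {z ∈ ℂ^n : |(z₁,…,z_k)| < |z_{k+1}| < ⋯ < |z_n| < 1} onto the product B^k × (D*)^{n−k}, with inverse G(w) = (w₁·w_{k+1}⋯w_n, …, w_k·w_{k+1}⋯w_n, w_{k+1}⋯w_n, …, w_{n−1}w_n, w_n). -/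
open MeasureTheory

/-- The generalized Hartogs triangle
H^n_k = {z ∈ ℂ^n : |(z₁,…,z_k)| < |z_{k+1}| < ⋯ < |z_n| < 1} (0-based indices). -/
def hartogsTriangle (n k : ℕ) : Set (Fin n → ℂ) :=
  {z | (∀ hkn : k < n,
          Real.sqrt (∑ i : Fin n, if (i : ℕ) < k then ‖z i‖ ^ 2 else 0) < ‖z ⟨k, hkn⟩‖) ∧
       (∀ j : Fin n, k ≤ (j : ℕ) → ∀ hj : (j : ℕ) + 1 < n, ‖z j‖ < ‖z ⟨(j : ℕ) + 1, hj⟩‖) ∧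
       (∀ hn : 0 < n, ‖z ⟨n - 1, Nat.sub_lt hn one_pos⟩‖ < 1)}

/-- The product domain B^k × (D*)^{n-k} inside ℂ^n (0-based indices). -/
def ballTimesPuncturedDisks (n k : ℕ) : Set (Fin n → ℂ) :=
  {w | Real.sqrt (∑ i : Fin n, if (i : ℕ) < k then ‖w i‖ ^ 2 else 0) < 1 ∧
       ∀ j : Fin n, k ≤ (j : ℕ) → (w j ≠ 0 ∧ ‖w j‖ < 1)}

/-- F(z) = (z₁/z_{k+1},…,z_k/z_{k+1}, z_{k+1}/z_{k+2},…,z_{n-1}/z_n, z_n). -/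
noncomputable def hartogsF (n k : ℕ) (hkn : k < n) (z : Fin n → ℂ) : Fin n → ℂ := fun i =>
  if h : (i : ℕ) < k then z i / z ⟨k, hkn⟩
  else if h' : (i : ℕ) + 1 < n then z i / z ⟨(i : ℕ) + 1, h'⟩
  else z i

/-- G(w) = (w₁·w_{k+1}⋯w_n, …, w_k·w_{k+1}⋯w_n, w_{k+1}⋯w_n, …, w_{n-1}w_n, w_n). -/
def hartogsG (n k : ℕ) (w : Fin n → ℂ) : Fin n → ℂ := fun i =>
  (if (i : ℕ) < k then w i else 1) *
    ∏ s : Fin n, (if max (i : ℕ) k ≤ (s : ℕ) then w s else 1)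

/-!
On the triangle the moduli |z_k| < ⋯ < |z_{n-1}| increase from |z_k| > |(z_0, …, z_{k-1})| ≥ 0,
so these coordinates do not vanish and F is holomorphic there. The tail products
w_m ⋯ w_{n-1} of w = F(z) telescope back to z_m, which is G ∘ F = id; conversely consecutive tail
products of w have quotient w_m, which is F ∘ G = id. Under these substitutions the defining
inequalities correspond: |(z_0, …, z_{k-1})| < |z_k| is |(w_0, …, w_{k-1})| < 1 after scaling by
|z_k|, and |z_m| < |z_{m+1}| is |w_m| < 1.
-/

section TailProd

variable {M : Type*} [CommMonoid M] {n : ℕ}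

def tailProd (m : ℕ) (w : Fin n → M) : M :=
  ∏ s : Fin n, if m ≤ (s : ℕ) then w s else 1

lemma tailProd_of_le {m : ℕ} (h : n ≤ m) (w : Fin n → M) : tailProd m w = 1 :=
  Finset.prod_eq_one fun s _ => if_neg (by omega)

lemma tailProd_eq_mul {m : ℕ} (h : m < n) (w : Fin n → M) :
    tailProd m w = w ⟨m, h⟩ * tailProd (m + 1) w := by
  unfold tailProd
  rw [← Finset.mul_prod_erase _ _ (Finset.mem_univ ⟨m, h⟩), if_pos le_rfl]
  congr 1
  rw [eq_comm, ← Finset.prod_erase _ (a := ⟨m, h⟩) (by simp)]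
  refine Finset.prod_congr rfl fun s hs => ?_
  have hsm : m ≠ (s : ℕ) := fun hc => (Finset.mem_erase.mp hs).1 (Fin.ext hc.symm)
  simp only [Nat.succ_le_iff, lt_iff_le_and_ne, ne_eq, hsm, not_false_eq_true, and_true]

lemma tailProd_ne_zero {M : Type*} [CommMonoidWithZero M] [Nontrivial M] [NoZeroDivisors M]
    {m : ℕ} {w : Fin n → M} (hw : ∀ j : Fin n, m ≤ (j : ℕ) → w j ≠ 0) : tailProd m w ≠ 0 :=
  Finset.prod_ne_zero_iff.mpr fun s _ => by
    split_ifs with h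
    exacts [hw s h, one_ne_zero]

end TailProd

lemma sqrt_sum_ite_norm_sq_of_eq_mul {ι 𝕜 : Type*} [Fintype ι] [NormedDivisionRing 𝕜]
    {p : ι → Prop} [DecidablePred p] {f g : ι → 𝕜} {c : 𝕜} (hg : ∀ i, p i → g i = f i * c) :
    √(∑ i, if p i then ‖g i‖ ^ 2 else 0) = √(∑ i, if p i then ‖f i‖ ^ 2 else 0) * ‖c‖ := by
  rw [← Real.sqrt_sq (norm_nonneg c), ← Real.sqrt_mul (by positivity), Finset.sum_mul]
  congr 1
  refine Finset.sum_congr rfl fun i _ => ?_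
  split_ifs with h
  exacts [by rw [hg i h, norm_mul, mul_pow], (zero_mul _).symm]

section Coordinates

variable {n k : ℕ}

lemma hartogsG_apply_of_lt (w : Fin n → ℂ) {i : Fin n} (h : (i : ℕ) < k) :
    hartogsG n k w i = w i * tailProd k w := by
  simp only [hartogsG, if_pos h, max_eq_right h.le, tailProd]

lemma hartogsG_apply_of_le (w : Fin n → ℂ) {i : Fin n} (h : k ≤ (i : ℕ)) :
    hartogsG n k w i = tailProd i w := by
  simp only [hartogsG, if_neg (not_lt.mpr h), max_eq_left h, one_mul, tailProd]

variable (hkn : k < n) (z : Fin n → ℂ)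

lemma hartogsF_apply_of_lt {i : Fin n} (h : (i : ℕ) < k) :
    hartogsF n k hkn z i = z i / z ⟨k, hkn⟩ :=
  dif_pos h

lemma hartogsF_apply_of_le_of_succ_lt {i : Fin n} (h : k ≤ (i : ℕ)) (h' : (i : ℕ) + 1 < n) :
    hartogsF n k hkn z i = z i / z ⟨i + 1, h'⟩ := by
  rw [hartogsF, dif_neg (not_lt.mpr h), dif_pos h']

lemma hartogsF_apply_of_not_succ_lt {i : Fin n} (h' : ¬ (i : ℕ) + 1 < n) :
    hartogsF n k hkn z i = z i := by
  rw [hartogsF, dif_neg (by omega), dif_neg h']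

end Coordinates

section Triangle

variable {n k : ℕ} {z : Fin n → ℂ}

lemma norm_pos_of_mem_hartogsTriangle (hz : z ∈ hartogsTriangle n k) {m : ℕ} (hkm : k ≤ m)
    (hm : m < n) : 0 < ‖z ⟨m, hm⟩‖ := by
  induction m, hkm using Nat.le_induction with
  | base => exact (Real.sqrt_nonneg _).trans_lt (hz.1 hm)
  | succ m hkm ih => exact (ih (by omega)).trans (hz.2.1 ⟨m, by omega⟩ hkm hm)

lemma ne_zero_of_mem_hartogsTriangle (hz : z ∈ hartogsTriangle n k) {j : Fin n}
    (hj : k ≤ (j : ℕ)) : z j ≠ 0 :=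
  norm_pos_iff.mp (norm_pos_of_mem_hartogsTriangle hz hj j.isLt)

end Triangle

lemma tailProd_hartogsF {n k : ℕ} (hkn : k < n) {z : Fin n → ℂ}
    (hz : ∀ j : Fin n, k ≤ (j : ℕ) → z j ≠ 0) {m : ℕ} (hkm : k ≤ m) (hm : m < n) :
    tailProd m (hartogsF n k hkn z) = z ⟨m, hm⟩ := by
  induction (Nat.le_sub_one_of_lt hm) using Nat.decreasingInduction with
  | self =>
    rw [tailProd_eq_mul hm, tailProd_of_le (by omega), mul_one,
      hartogsF_apply_of_not_succ_lt hkn z (by simp; omega)]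
  | of_succ m hm' ih =>
    rw [tailProd_eq_mul hm, hartogsF_apply_of_le_of_succ_lt hkn z hkm (by simp; omega),
      ih (by omega) (by omega)]
    exact div_mul_cancel₀ _ (hz _ (by simp; omega))

section Inverse

variable {n k : ℕ} (hkn : k < n)

lemma hartogsG_hartogsF {z : Fin n → ℂ} (hz : z ∈ hartogsTriangle n k) :
    hartogsG n k (hartogsF n k hkn z) = z := by
  have hz0 : ∀ j : Fin n, k ≤ (j : ℕ) → z j ≠ 0 := fun _ => ne_zero_of_mem_hartogsTriangle hz
  funext i
  by_cases h : (i : ℕ) < k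
  · rw [hartogsG_apply_of_lt _ h, tailProd_hartogsF hkn hz0 le_rfl hkn,
      hartogsF_apply_of_lt hkn z h, div_mul_cancel₀ _ (hz0 ⟨k, hkn⟩ le_rfl)]
  · rw [hartogsG_apply_of_le _ (not_lt.mp h), tailProd_hartogsF hkn hz0 (not_lt.mp h) i.isLt]

lemma hartogsF_hartogsG {w : Fin n → ℂ} (hw : ∀ j : Fin n, k ≤ (j : ℕ) → w j ≠ 0) :
    hartogsF n k hkn (hartogsG n k w) = w := by
  funext i
  by_cases h : (i : ℕ) < k
  · rw [hartogsF_apply_of_lt hkn _ h, hartogsG_apply_of_lt _ h,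
      hartogsG_apply_of_le (i := ⟨k, hkn⟩) _ le_rfl,
      mul_div_cancel_right₀ _ (tailProd_ne_zero hw)]
  have hki : k ≤ (i : ℕ) := not_lt.mp h
  by_cases h' : (i : ℕ) + 1 < n
  · rw [hartogsF_apply_of_le_of_succ_lt hkn _ hki h', hartogsG_apply_of_le _ hki,
      hartogsG_apply_of_le (i := ⟨i + 1, h'⟩) _ (by simp; omega), tailProd_eq_mul i.isLt,
      mul_div_cancel_right₀ _ (tailProd_ne_zero fun j hj => hw j (by omega))]
  · rw [hartogsF_apply_of_not_succ_lt hkn _ h', hartogsG_apply_of_le _ hki,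
      tailProd_eq_mul i.isLt, tailProd_of_le (by omega), mul_one]

end Inverse

section MapsTo

variable {n k : ℕ}

lemma hartogsF_mem_ballTimesPuncturedDisks (hkn : k < n) {z : Fin n → ℂ}
    (hz : z ∈ hartogsTriangle n k) :
    hartogsF n k hkn z ∈ ballTimesPuncturedDisks n k := by
  have hz0 : ∀ j : Fin n, k ≤ (j : ℕ) → z j ≠ 0 := fun _ => ne_zero_of_mem_hartogsTriangle hz
  constructor
  · rw [sqrt_sum_ite_norm_sq_of_eq_mul (c := (z ⟨k, hkn⟩)⁻¹)
      fun i h => (hartogsF_apply_of_lt hkn z h).trans (div_eq_mul_inv _ _),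
      norm_inv, mul_inv_lt_iff₀ (norm_pos_of_mem_hartogsTriangle hz le_rfl hkn), one_mul]
    exact hz.1 hkn
  intro j hj
  by_cases h' : (j : ℕ) + 1 < n
  · have hz1 : z ⟨j + 1, h'⟩ ≠ 0 := hz0 _ (by simp; omega)
    rw [hartogsF_apply_of_le_of_succ_lt hkn z hj h', norm_div,
      div_lt_one (norm_pos_iff.mpr hz1)]
    exact ⟨div_ne_zero (hz0 j hj) hz1, hz.2.1 j hj h'⟩
  · have hj_last : j = ⟨n - 1, by omega⟩ := Fin.ext (by simp; omega)
    rw [hartogsF_apply_of_not_succ_lt hkn z h']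
    exact ⟨hz0 j hj, hj_last ▸ hz.2.2 (by omega)⟩

lemma hartogsG_mem_hartogsTriangle (hkn : k < n) {w : Fin n → ℂ}
    (hw : w ∈ ballTimesPuncturedDisks n k) :
    hartogsG n k w ∈ hartogsTriangle n k := by
  have htail_pos : ∀ m, k ≤ m → 0 < ‖tailProd m w‖ := fun m hm =>
    norm_pos_iff.mpr (tailProd_ne_zero fun j hj => (hw.2 j (hm.trans hj)).1)
  refine ⟨fun hkn' => ?_, fun j hj hj' => ?_, fun hn => ?_⟩
  · rw [sqrt_sum_ite_norm_sq_of_eq_mul fun i h => hartogsG_apply_of_lt w h,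
      hartogsG_apply_of_le (i := ⟨k, hkn'⟩) w le_rfl]
    exact mul_lt_of_lt_one_left (htail_pos k le_rfl) hw.1
  · rw [hartogsG_apply_of_le w hj, hartogsG_apply_of_le (i := ⟨j + 1, hj'⟩) w (by simp; omega),
      tailProd_eq_mul j.isLt, norm_mul]
    exact mul_lt_of_lt_one_left (htail_pos _ (by omega)) (hw.2 j hj).2
  · rw [hartogsG_apply_of_le w (by simp; omega), tailProd_eq_mul (by omega),
      tailProd_of_le (by simp; omega), mul_one]
    exact (hw.2 _ (by simp; omega)).2

end MapsTo

lemma differentiable_hartogsG (n k : ℕ) : Differentiable ℂ (hartogsG n k) := by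
  refine differentiable_pi.mpr fun i => ?_
  simp only [hartogsG, ← Finset.prod_filter]
  split_ifs <;> fun_prop

lemma differentiableOn_hartogsF {n k : ℕ} (hkn : k < n) :
    DifferentiableOn ℂ (hartogsF n k hkn) (hartogsTriangle n k) := by
  refine differentiableOn_pi.mpr fun i => ?_
  unfold hartogsF
  split_ifs with h h'
  · simp only [div_eq_mul_inv]
    fun_prop (disch := exact fun z hz => ne_zero_of_mem_hartogsTriangle hz le_rfl)
  · simp only [div_eq_mul_inv]
    fun_prop (disch := exact fun z hz =>
      ne_zero_of_mem_hartogsTriangle hz (j := ⟨i + 1, h'⟩) (by simp; omega))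
  · fun_prop

theorem hartogsF_biholomorphism_general (n k : ℕ) (hkn : k < n) :
    Set.BijOn (hartogsF n k hkn) (hartogsTriangle n k) (ballTimesPuncturedDisks n k) ∧
    DifferentiableOn ℂ (hartogsF n k hkn) (hartogsTriangle n k) ∧
    DifferentiableOn ℂ (hartogsG n k) (ballTimesPuncturedDisks n k) ∧
    (∀ z ∈ hartogsTriangle n k, hartogsG n k (hartogsF n k hkn z) = z) ∧
    (∀ w ∈ ballTimesPuncturedDisks n k, hartogsF n k hkn (hartogsG n k w) = w) := by
  have hGF : Set.LeftInvOn (hartogsG n k) (hartogsF n k hkn) (hartogsTriangle n k) :=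
    fun _ hz => hartogsG_hartogsF hkn hz
  have hFG : Set.RightInvOn (hartogsG n k) (hartogsF n k hkn) (ballTimesPuncturedDisks n k) :=
    fun _ hw => hartogsF_hartogsG hkn fun j hj => (hw.2 j hj).1
  exact ⟨Set.InvOn.bijOn ⟨hGF, hFG⟩ (fun _ => hartogsF_mem_ballTimesPuncturedDisks hkn)
      (fun _ => hartogsG_mem_hartogsTriangle hkn),
    differentiableOn_hartogsF hkn, (differentiable_hartogsG n k).differentiableOn, hGF, hFG⟩

/-- F is a biholomorphism from H^n_k onto B^k × (D*)^{n-k}, with inverse G. -/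
theorem hartogsF_biholomorphism (n k : ℕ) (hk : 1 ≤ k) (hkn : k < n) :
    Set.BijOn (hartogsF n k hkn) (hartogsTriangle n k) (ballTimesPuncturedDisks n k) ∧
    DifferentiableOn ℂ (hartogsF n k hkn) (hartogsTriangle n k) ∧
    DifferentiableOn ℂ (hartogsG n k) (ballTimesPuncturedDisks n k) ∧
    (∀ z ∈ hartogsTriangle n k, hartogsG n k (hartogsF n k hkn z) = z) ∧
    (∀ w ∈ ballTimesPuncturedDisks n k, hartogsF n k hkn (hartogsG n k w) = w) :=
  hartogsF_biholomorphism_general n k hkn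
end

section
/- Define a_j = j^{−j} for j ≥ 1 and, for n ≥ 2, g(r) = r^{1/j − (n+1)} for r ∈ (a_{j+1}, a_j]. Then the sum Σ_{j=1}^∞ j·(a_j^{2n/(j(n+1))} − a_{j+1}^{2n/(j(n+1))}) converges (in fact it is bounded by a constant times Σ j^{−1−1/(2(n+1))}). -/
/-! With `α = 2n/(n+1) > 1`, the `j`-th term is `j (j^{-α} - (j+1)^{-α(1+1/j)})`.
Writing `(j+1)^{-α(1+1/j)} = j^{-α} e^{-u}`, the bound `log (1 + 1/j) ≤ 1/j` gives
`u ≤ (α/j)(2 + log j)`, so `1 - e^{-u} ≤ u` bounds the term by `α j^{-α} (2 + log j)`.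
As `log j = O(j^ε)` for every `ε > 0`, this is `O(j^{-(α+1)/2})`, a convergent p-series. -/

open Real

lemma Real.log_add_one_sub_log_le {x : ℝ} (hx : 0 < x) : log (x + 1) - log x ≤ x⁻¹ := by
  have h := log_le_sub_one_of_pos (div_pos (by linarith) hx : 0 < (x + 1) / x)
  rwa [log_div (by linarith) hx.ne', add_div, div_self hx.ne', one_div, add_sub_cancel_left] at h

lemma Real.two_add_log_le_rpow {x ε : ℝ} (hx : 1 ≤ x) (hε : 0 < ε) :
    2 + log x ≤ (2 + ε⁻¹) * x ^ ε := by
  have hlog := log_le_rpow_div (x := x) (by linarith) hε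
  have hone := one_le_rpow hx hε.le
  rw [div_eq_mul_inv] at hlog
  nlinarith [inv_pos.2 hε]

lemma Real.add_one_rpow_neg_le {x α : ℝ} (hx : 0 < x) (hα : 0 ≤ α) :
    (x + 1) ^ (-(α + α / x)) ≤ x ^ (-α) :=
  calc (x + 1) ^ (-(α + α / x)) ≤ (x + 1) ^ (-α) :=
        rpow_le_rpow_of_exponent_le (by linarith) (by have := div_nonneg hα hx.le; linarith)
    _ ≤ x ^ (-α) := rpow_le_rpow_of_nonpos hx (by linarith) (by linarith)

lemma Real.mul_rpow_neg_sub_add_one_rpow_le {x α : ℝ} (hx : 1 ≤ x) (hα : 0 ≤ α) :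
    x * (x ^ (-α) - (x + 1) ^ (-(α + α / x))) ≤ α * x ^ (-α) * (2 + log x) := by
  have hx0 : 0 < x := by linarith
  set u := α * (log (x + 1) - log x) + α / x * log (x + 1)
  have hsplit : (x + 1) ^ (-(α + α / x)) = x ^ (-α) * exp (-u) := by
    rw [rpow_def_of_pos (by linarith), rpow_def_of_pos hx0, ← exp_add]
    congr 1
    ring
  have hu : u ≤ α / x * (2 + log x) := by
    have hdiff := log_add_one_sub_log_le hx0
    have hinv : x⁻¹ ≤ 1 := inv_le_one_of_one_le₀ hx
    have hαx : 0 ≤ α / x := div_nonneg hα hx0.le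
    have hα_diff : α * (log (x + 1) - log x) ≤ α / x := by
      rw [div_eq_mul_inv]; exact mul_le_mul_of_nonneg_left hdiff hα
    nlinarith
  have hexp : 1 - exp (-u) ≤ u := by linarith [one_sub_le_exp_neg u]
  calc x * (x ^ (-α) - (x + 1) ^ (-(α + α / x))) = x * x ^ (-α) * (1 - exp (-u)) := by
        rw [hsplit]; ring
    _ ≤ x * x ^ (-α) * (α / x * (2 + log x)) := by gcongr; exact hexp.trans hu
    _ = α * x ^ (-α) * (2 + log x) := by field_simp

theorem summable_natCast_mul_rpow_neg_sub_add_one_rpow {α : ℝ} (hα : 1 < α) :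
    Summable fun j : ℕ => (j : ℝ) * ((j : ℝ) ^ (-α) - ((j : ℝ) + 1) ^ (-(α + α / j))) := by
  set ε := (α - 1) / 2 with hε_def
  have hε : 0 < ε := by positivity
  have hmajorant : Summable fun j : ℕ => α * (2 + ε⁻¹) * (j : ℝ) ^ (-α + ε) :=
    (summable_nat_rpow.2 (by rw [hε_def]; linarith)).mul_left _
  refine hmajorant.of_nonneg_of_le (fun j => ?_) (fun j => ?_)
  all_goals rcases j.eq_zero_or_pos with rfl | hj
  · simp
  · have hx : (0 : ℝ) < j := by exact_mod_cast hj
    exact mul_nonneg hx.le (sub_nonneg.2 (add_one_rpow_neg_le hx (by linarith)))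
  · simp only [CharP.cast_eq_zero, zero_mul]; positivity
  · have hx : (1 : ℝ) ≤ j := by exact_mod_cast hj
    calc _ ≤ α * (j : ℝ) ^ (-α) * (2 + log j) := mul_rpow_neg_sub_add_one_rpow_le hx (by linarith)
      _ ≤ α * (j : ℝ) ^ (-α) * ((2 + ε⁻¹) * (j : ℝ) ^ ε) := by
          gcongr; exact two_add_log_le_rpow hx hε
      _ = α * (2 + ε⁻¹) * (j : ℝ) ^ (-α + ε) := by
          rw [rpow_add (by linarith)]; ring

/-- With a_j = j^{-j} and n ≥ 2, the series Σ_j j·(a_j^{2n/(j(n+1))} − a_{j+1}^{2n/(j(n+1))})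
converges. -/
theorem hartogs_series_converges (n : ℕ) (hn : 2 ≤ n) :
    Summable (fun j : ℕ =>
      (j : ℝ) *
        (((j : ℝ) ^ (-(j : ℝ))) ^ (2 * (n : ℝ) / ((j : ℝ) * ((n : ℝ) + 1))) -
          (((j : ℝ) + 1) ^ (-((j : ℝ) + 1))) ^ (2 * (n : ℝ) / ((j : ℝ) * ((n : ℝ) + 1))))) := by
  have hα : 1 < 2 * (n : ℝ) / (n + 1) := by
    have : (2 : ℝ) ≤ n := by exact_mod_cast hn
    rw [lt_div_iff₀ (by positivity)]; linarith
  refine (summable_natCast_mul_rpow_neg_sub_add_one_rpow hα).congr fun j => ?_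
  rcases j.eq_zero_or_pos with rfl | hj
  · simp
  have hx : (0 : ℝ) < j := by exact_mod_cast hj
  rw [← rpow_mul hx.le, ← rpow_mul (by positivity)]
  congr 3 <;> field_simp
end
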